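/- For the tree t_n = a((bc)^n) (a root labeled a with 2n children alternately labeled b and c, all leaves), and any k >= 1 with padding symbol Box = a: (i) |t_n| = 2n+1; (ii) the k-th order degree-label entropy satisfies H^{deg,ell}_k(t_n) = 2n; (iii) the k-th order label entropy satisfies H^ell_k(t_n) >= 2n; (iv) the label-shape entropy satisfies H_k(t_n) <= log2(e) + log2(n - floor((k-1)/2)) + 2. -/

import Mathlib

/-- Last `k` entries of a list. -/
def lastN {α} (k : ℕ) (l : List α) : List α := l.drop (l.length - k)

/-- Generic empirical entropy in per-node form: for each node `e` of `D` we add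
`log2 (#{e' | cond e' = cond e} / #{e' | cond e' = cond e ∧ val e' = val e})`.
Grouping nodes by the pair `(cond, val)` recovers the usual form
`∑_z ∑_w m_{z,w} log2 (m_z / m_{z,w})`. -/
noncomputable def entropySum {α β γ : Type*} [DecidableEq β] [DecidableEq γ]
    (D : List α) (cond : α → β) (val : α → γ) : ℝ :=
  (D.map (fun e => Real.logb 2
    ((D.countP (fun e' => decide (cond e' = cond e)) : ℝ) /
     (D.countP (fun e' => decide (cond e' = cond e ∧ val e' = val e)) : ℝ)))).sum

/-- `k`-label-history given the list of ancestor labels (padded with `box`). -/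
def kLabHist {σ} (box : σ) (k : ℕ) (h : List σ) : List σ :=
  lastN k (List.replicate k box ++ h)
-- Unranked ordered labeled trees and forests.
mutual
inductive UTree (σ : Type) where
  | node (a : σ) (children : UForest σ) : UTree σ
inductive UForest (σ : Type) where
  | nil : UForest σ
  | cons (t : UTree σ) (f : UForest σ) : UForest σ
end

/-- Number of trees in a forest. -/
def UForest.len {σ} : UForest σ → ℕ
  | .nil => 0
  | .cons _ f => 1 + f.len

mutual
/-- List of (label-history, label, degree) triples, one per node. -/
def udata {σ} (hist : List σ) : UTree σ → List (List σ × σ × ℕ)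
  | .node a f => (hist, a, f.len) :: fudata (hist ++ [a]) f
/-- Node data of a forest of subtrees rooted at label-history `hist`. -/
def fudata {σ} (hist : List σ) : UForest σ → List (List σ × σ × ℕ)
  | .nil => []
  | .cons t f => udata hist t ++ fudata hist f
end

/-- Number of nodes of an unranked tree. -/
def sizeU {σ} (t : UTree σ) : ℕ := (udata [] t).length
/-- `k`-th order label entropy `H^ℓ_k` of an unranked tree. -/
noncomputable def HlU {σ} [DecidableEq σ] (box : σ) (k : ℕ) (t : UTree σ) : ℝ :=
  entropySum (udata [] t) (fun e => kLabHist box k e.1) (fun e => e.2.1)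

/-- `k`-th order label-degree entropy `H^{ℓ,deg}_k` of an unranked tree. -/
noncomputable def HldU {σ} [DecidableEq σ] (box : σ) (k : ℕ) (t : UTree σ) : ℝ :=
  entropySum (udata [] t) (fun e => (kLabHist box k e.1, e.2.1)) (fun e => e.2.2)

/-- `k`-th order degree-label entropy `H^{deg,ℓ}_k` of an unranked tree. -/
noncomputable def HdlU {σ} [DecidableEq σ] (box : σ) (k : ℕ) (t : UTree σ) : ℝ :=
  entropySum (udata [] t) (fun e => (kLabHist box k e.1, e.2.2)) (fun e => e.2.1)

/-- Degree entropy `H^deg` of an unranked tree: `∑_i n_i log2(|t|/n_i)`. -/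
noncomputable def HdegU {σ} [DecidableEq σ] (t : UTree σ) : ℝ :=
  entropySum (udata [] t) (fun _ => ()) (fun e => e.2.2)
/-- Labeled binary trees: every node has 0 or 2 children. -/
inductive LBT (σ : Type) where
  | leaf (a : σ) : LBT σ
  | node (a : σ) (l r : LBT σ) : LBT σ

/-- List of (history, label, degree) triples of a binary tree, one per node.
The history records alternately labels and direction bits (`false` = left). -/
def ldata {σ} (hist : List (σ × Bool)) : LBT σ → List (List (σ × Bool) × σ × ℕ)
  | .leaf a => [(hist, a, 0)]
  | .node a l r =>
      (hist, a, 2) :: (ldata (hist ++ [(a, false)]) l ++ ldata (hist ++ [(a, true)]) r)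
/-- `k`-history of a node given its full history: the last `k` entries after
padding on the left with `(box, false)`. -/
def kHist {σ} (box : σ) (k : ℕ) (h : List (σ × Bool)) : List (σ × Bool) :=
  lastN k (List.replicate k (box, false) ++ h)

/-- `k`-th order label-shape entropy of a labeled binary tree. -/
noncomputable def Hls {σ} [DecidableEq σ] (box : σ) (k : ℕ) (t : LBT σ) : ℝ :=
  entropySum (ldata [] t) (fun e => kHist box k e.1) (fun e => e.2)
/-- The first-child next-sibling encoding of a forest: the left child of a node is
its first child, the right child its next sibling; missing children become
`box`-labeled dummy leaves. -/
def fcns {σ} (box : σ) : UForest σ → LBT σ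
  | .nil => .leaf box
  | .cons (.node a f) rest => .node a (fcns box f) (fcns box rest)

/-- The fcns encoding of a single unranked tree. -/
def fcnsT {σ} (box : σ) (t : UTree σ) : LBT σ := fcns box (.cons t .nil)

/-- The three-letter alphabet `{a, b, c}`. -/
inductive ABC where
  | a | b | c
deriving DecidableEq

/-- A single leaf node with label `x`. -/
def leafU {σ} (x : σ) : UTree σ := .node x .nil

/-- The forest `(bc)^n` of alternating `b`- and `c`-labeled leaves. -/
def bcForest : ℕ → UForest ABC
  | 0 => .nil
  | n + 1 => .cons (leafU .b) (.cons (leafU .c) (bcForest n))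

/-- The tree `t_n = a((bc)^n)`: a root labeled `a` with `2n` leaf children,
alternately labeled `b` and `c`. -/
def tBC (n : ℕ) : UTree ABC := .node .a (bcForest n)

/-!
In `t_n` every node has `k`-label-history `a^k`, so (ii) and (iii) are direct counts: the root is
alone in its class of `(history, degree)` and the `2n` leaves split evenly into `b`'s and `c`'s.

For (iv), the last entry of a `k`-history (`k ≥ 1`) of `fcns(t_n)` records the parent's label and
the direction. Off the spine `b, …, b, □` of next siblings this determines the label and degree,
so those nodes contribute nothing. The `j`-th `b` of the spine has `k`-history
`(a,←)^(k-2j)` followed by a suffix of `((b,→)(c,→))^j`: these are pairwise distinct for `2j < k`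
and all equal for `2j ≥ k`. So the root and the first `b` share the class `(a,←)^k` and contribute
`2`, and the `c = n - ⌈k/2⌉` saturated `b`'s share their class with the final `□` only, which
contributes `c log((c+1)/c) + log(c+1) ≤ log e + log(c+1)`.
-/

open List

section EntropySum

variable {α β γ : Type*} [DecidableEq β] [DecidableEq γ]

theorem entropySum_perm {D D' : List α} (h : D.Perm D') (cond : α → β) (val : α → γ) :
    entropySum D cond val = entropySum D' cond val := by
  simp only [entropySum, h.countP_eq]
  exact (h.map _).sum_eq

theorem entropySum_append {S R : List α} {cond : α → β} (val : α → γ)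
    (hsep : ∀ x ∈ S, ∀ y ∈ R, cond x ≠ cond y) :
    entropySum (S ++ R) cond val = entropySum S cond val + entropySum R cond val := by
  unfold entropySum
  rw [map_append, sum_append]
  congr 1 <;> refine congrArg sum (map_congr_left fun x hx => ?_) <;>
    rw [countP_append, countP_append]
  · rw [countP_eq_zero.2 fun y hy h => hsep x hx y hy (of_decide_eq_true h).symm,
      countP_eq_zero.2 fun y hy h => hsep x hx y hy (of_decide_eq_true h).1.symm]
    simp
  · rw [countP_eq_zero.2 fun y hy h => hsep y hy x hx (of_decide_eq_true h),
      countP_eq_zero.2 fun y hy h => hsep y hy x hx (of_decide_eq_true h).1]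
    simp

theorem entropySum_eq_filter_add_filter (D : List α) (cond : α → β) (val : α → γ) (p : β → Bool) :
    entropySum D cond val =
      entropySum (D.filter (p ∘ cond)) cond val +
        entropySum (D.filter fun e => !p (cond e)) cond val := by
  refine (entropySum_perm (filter_append_perm (p ∘ cond) D) cond val).symm.trans
    (entropySum_append val fun x hx y hy hxy => ?_)
  simp only [mem_filter, Function.comp_apply] at hx hy
  simp [← hxy, hx.2] at hy

theorem entropySum_eq_zero {D : List α} {cond : α → β} {val : α → γ}
    (h : ∀ x ∈ D, ∀ y ∈ D, cond x = cond y → val x = val y) :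
    entropySum D cond val = 0 := by
  refine sum_eq_zero fun r hr => ?_
  obtain ⟨e, he, rfl⟩ := mem_map.mp hr
  have hval : D.countP (fun e' => decide (cond e' = cond e ∧ val e' = val e)) =
      D.countP (fun e' => decide (cond e' = cond e)) :=
    countP_congr fun y hy => by simpa using fun hc => h y hy e he hc
  rw [hval, Real.logb, Real.log_div_self, zero_div]

theorem entropySum_pair {x y : α} {cond : α → β} {val : α → γ}
    (hc : cond x = cond y) (hv : val x ≠ val y) :
    entropySum [x, y] cond val = 2 := by
  norm_num [entropySum, hc, hv, hv.symm, Real.logb_self_eq_one]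

theorem entropySum_append_singleton {S : List α} {x : α} {cond : α → β} {val : α → γ} {v : γ}
    (hS : ∀ s ∈ S, val s = v) (hx : val x ≠ v) :
    entropySum (S ++ [x]) cond val =
      (S.countP (cond · = cond x) : ℝ) *
          Real.logb 2 ((S.countP (cond · = cond x) + 1 : ℝ) / S.countP (cond · = cond x)) +
        Real.logb 2 (S.countP (cond · = cond x) + 1) := by
  set m := S.countP (cond · = cond x)
  have hSv : ∀ z, S.countP (fun s => decide (cond s = z ∧ val s = v)) = S.countP (cond · = z) :=
    fun z => countP_congr fun s hs => by simp [hS s hs]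
  have hterm : ∀ s ∈ S,
      Real.logb 2 (((S ++ [x]).countP (cond · = cond s) : ℝ) /
          (S ++ [x]).countP (fun e => decide (cond e = cond s ∧ val e = val s))) =
        if cond s = cond x then Real.logb 2 ((m + 1 : ℝ) / m) else 0 := by
    intro s hs
    rw [countP_append, countP_append, hS s hs, hSv]
    by_cases hsx : cond s = cond x
    · simp [hsx, hx, m]
    · simp [hsx, Ne.symm hsx, Real.logb]
  have hSx : S.countP (fun e => decide (cond e = cond x ∧ val e = val x)) = 0 :=
    countP_eq_zero.2 fun s hs h => hx (by rw [← hS s hs, (of_decide_eq_true h).2])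
  unfold entropySum
  rw [map_append, sum_append, map_congr_left hterm, sum_map_ite, map_const', map_const',
    sum_replicate, sum_replicate, ← countP_eq_length_filter]
  simp only [map_cons, map_nil, sum_cons, sum_nil, countP_append, hSx]
  simp [m]

end EntropySum

theorem mul_logb_add_one_div_le {b : ℝ} (hb : 1 < b) (c : ℕ) :
    (c : ℝ) * Real.logb b ((c + 1) / c) ≤ Real.logb b (Real.exp 1) := by
  rcases Nat.eq_zero_or_pos c with rfl | hc
  · simpa using Real.logb_nonneg hb (Real.one_le_exp zero_le_one)
  have hc' : (0 : ℝ) < c := by exact_mod_cast hc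
  have hlog : Real.log ((c + 1) / c) ≤ 1 / c := by
    have := Real.log_le_sub_one_of_pos (show (0 : ℝ) < (c + 1) / c by positivity)
    rw [add_div, div_self hc'.ne'] at this ⊢
    linarith
  rw [Real.logb, Real.logb, Real.log_exp, ← mul_div_assoc]
  gcongr
  · exact (Real.log_pos hb).le
  · calc (c : ℝ) * Real.log ((c + 1) / c) ≤ c * (1 / c) := by gcongr
      _ = 1 := mul_one_div_cancel hc'.ne'

/-- For `d ≥ n` the right-hand side is `logb` of a non-positive integer, which is
nonnegative because `Real.log x = Real.log |x|` and `Real.log 0 = 0`. -/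
theorem logb_natSub_succ_add_one_le {b : ℝ} (hb : 1 < b) (n d : ℕ) :
    Real.logb b ((n - (d + 1) : ℕ) + 1) ≤ Real.logb b ((n : ℝ) - d) := by
  by_cases h : d + 1 ≤ n
  · exact le_of_eq (congrArg _ (by push_cast [Nat.cast_sub h]; ring))
  · rw [Nat.sub_eq_zero_of_le (by omega), Nat.cast_zero, zero_add, Real.logb_one]
    have := Real.log_intCast_nonneg ((n : ℤ) - d)
    push_cast at this
    exact div_nonneg this (Real.log_pos hb).le

theorem countP_range_le (t m : ℕ) : (range m).countP (t ≤ ·) = m - t := by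
  induction m with
  | zero => simp
  | succ m ih =>
    rw [range_succ, countP_append, ih]
    by_cases h : t ≤ m <;> simp [h] <;> omega

section History

variable {σ : Type*}

theorem lastN_append (k : ℕ) (l₁ l₂ : List σ) :
    lastN k (l₁ ++ l₂) = lastN (k - l₂.length) l₁ ++ lastN k l₂ := by
  simp only [lastN, length_append, drop_append]
  congr 1
  · rcases le_or_gt k l₂.length with h | h
    · rw [Nat.sub_eq_zero_of_le h, Nat.sub_zero, drop_length, drop_eq_nil_of_le (by omega)]
    · congr 1; omega
  · congr 1; omega

theorem lastN_replicate (k n : ℕ) (x : σ) : lastN k (replicate n x) = replicate (min k n) x := by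
  simp only [lastN, length_replicate, drop_replicate]
  congr 1; omega

theorem getLast?_lastN {k : ℕ} (hk : k ≠ 0) (l : List σ) : (lastN k l).getLast? = l.getLast? := by
  rcases l with _ | ⟨x, l⟩
  · simp [lastN]
  · rw [lastN, getLast?_drop, if_neg (by simp; omega)]

theorem kLabHist_eq (box : σ) (k : ℕ) (h : List σ) :
    kLabHist box k h = replicate (k - h.length) box ++ lastN k h := by
  rw [kLabHist, lastN_append, lastN_replicate, min_eq_left (Nat.sub_le k _)]

theorem kLabHist_box_cons (box : σ) (k : ℕ) (h : List σ) :
    kLabHist box k (box :: h) = kLabHist box k h := by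
  rw [kLabHist, ← singleton_append, ← append_assoc, ← replicate_succ', lastN_append,
    lastN_replicate, kLabHist_eq]
  congr 2
  omega

theorem getLast?_kLabHist (box : σ) {k : ℕ} (hk : k ≠ 0) (h : List σ) :
    (kLabHist box k h).getLast? = h.getLast?.or (some box) := by
  rw [kLabHist, getLast?_lastN hk, getLast?_append, getLast?_replicate, if_neg hk]

end History

theorem UForest.len_bcForest (n : ℕ) : (bcForest n).len = 2 * n := by
  induction n with
  | zero => rfl
  | succ m ih => simp only [bcForest, UForest.len, ih]; ring

theorem fudata_bcForest (h : List ABC) (n : ℕ) :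
    fudata h (bcForest n) = (replicate n [(h, .b, 0), (h, .c, 0)]).flatten := by
  induction n with
  | zero => rfl
  | succ m ih => simp [bcForest, fudata, udata, leafU, UForest.len, ih, replicate_succ]

theorem udata_tBC (n : ℕ) :
    udata [] (tBC n) =
      ([], .a, 2 * n) :: (replicate n [([.a], .b, 0), ([.a], .c, 0)]).flatten := by
  simp [tBC, udata, UForest.len_bcForest, fudata_bcForest]

theorem sizeU_tBC (n : ℕ) : sizeU (tBC n) = 2 * n + 1 := by
  simp [sizeU, udata_tBC, length_flatten]
  omega

theorem countP_udata_tBC (n : ℕ) (p : List ABC × ABC × ℕ → Bool) :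
    (udata [] (tBC n)).countP p =
      (if p ([], .a, 2 * n) then 1 else 0) +
        n * ((if p ([.a], .b, 0) then 1 else 0) + (if p ([.a], .c, 0) then 1 else 0)) := by
  simp [udata_tBC, countP_flatten, countP_cons, add_comm]

theorem sum_map_udata_tBC (n : ℕ) (f : List ABC × ABC × ℕ → ℝ) :
    ((udata [] (tBC n)).map f).sum =
      f ([], .a, 2 * n) + n * (f ([.a], .b, 0) + f ([.a], .c, 0)) := by
  simp [udata_tBC, map_flatten, sum_flatten, mul_add]

theorem HdlU_tBC (n k : ℕ) (hn : 1 ≤ n) : HdlU ABC.a k (tBC n) = 2 * n := by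
  have h2n : 2 * n ≠ 0 := by omega
  have hn' : (n : ℝ) ≠ 0 := by positivity
  simp only [HdlU, entropySum, sum_map_udata_tBC, countP_udata_tBC]
  simp [kLabHist_box_cons, h2n, Ne.symm h2n, mul_div_cancel_left₀ _ hn']
  ring

theorem HlU_tBC (n k : ℕ) (hn : 1 ≤ n) : (2 * n : ℝ) ≤ HlU ABC.a k (tBC n) := by
  have hn' : (0 : ℝ) < n := by exact_mod_cast hn
  have hleaf : 1 ≤ Real.logb 2 ((1 + n * 2) / n) :=
    (Real.le_logb_iff_rpow_le one_lt_two (by positivity)).2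
      (by rw [Real.rpow_one, le_div_iff₀ hn']; linarith)
  have hroot : 0 ≤ Real.logb 2 (1 + n * 2) := Real.logb_nonneg one_lt_two (by linarith)
  simp only [HlU, entropySum, sum_map_udata_tBC, countP_udata_tBC]
  simp [kLabHist_box_cons]
  nlinarith

/-- History of the `j`-th `b`-node of `fcns (bcForest n)` relative to the first one. -/
def bcSteps (j : ℕ) : List (ABC × Bool) := (replicate j [(.b, true), (.c, true)]).flatten

@[simp] theorem bcSteps_zero : bcSteps 0 = [] := rfl

theorem length_bcSteps (j : ℕ) : (bcSteps j).length = 2 * j := by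
  simp [bcSteps, length_flatten, mul_comm]

theorem bcSteps_succ (j : ℕ) : bcSteps (j + 1) = [(.b, true), (.c, true)] ++ bcSteps j := by
  simp [bcSteps, replicate_succ]

theorem bcSteps_succ' (j : ℕ) : bcSteps (j + 1) = bcSteps j ++ [(.b, true), (.c, true)] := by
  simp [bcSteps, replicate_succ']

theorem getLast?_bcSteps (j : ℕ) :
    (bcSteps j).getLast? = if j = 0 then none else some (.c, true) := by
  cases j with
  | zero => rfl
  | succ j => simp [bcSteps_succ', getLast?_append]

/-- The nodes of `fcns` contributed by one `b`-leaf and one `c`-leaf at chain history `g`. -/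
def bcBlock (g : List (ABC × Bool)) : List (List (ABC × Bool) × ABC × ℕ) :=
  [(g, .b, 2), (g ++ [(.b, false)], .a, 0), (g ++ [(.b, true)], .c, 2),
    (g ++ [(.b, true), (.c, false)], .a, 0)]

theorem ldata_fcns_bcForest (h : List (ABC × Bool)) (n : ℕ) :
    ldata h (fcns .a (bcForest n)) =
      (range n).flatMap (fun j => bcBlock (h ++ bcSteps j)) ++ [(h ++ bcSteps n, .a, 0)] := by
  induction n generalizing h with
  | zero => simp [bcForest, fcns, ldata, bcSteps]
  | succ m ih =>
    rw [range_succ_eq_map, flatMap_cons, flatMap_map]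
    show ldata h (.node .b (.leaf .a) (.node .c (.leaf .a) (fcns .a (bcForest m)))) = _
    simp [ldata, ih, bcBlock, bcSteps_succ]

theorem ldata_fcnsT_tBC (n : ℕ) :
    ldata [] (fcnsT .a (tBC n)) =
      ([], .a, 2) :: ((range n).flatMap (fun j => bcBlock ((.a, false) :: bcSteps j)) ++
        [((.a, false) :: bcSteps n, .a, 0), ([(.a, true)], .a, 0)]) := by
  show ldata [] (.node .a (fcns .a (bcForest n)) (.leaf .a)) = _
  simp [ldata, ldata_fcns_bcForest]

theorem getLast?_kHist {k : ℕ} (hk : k ≠ 0) (h : List (ABC × Bool)) :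
    (kHist .a k h).getLast? = h.getLast?.or (some (.a, false)) :=
  getLast?_kLabHist _ hk h

theorem kHist_nil (k : ℕ) : kHist .a k [] = kHist .a k ((.a, false) :: bcSteps 0) :=
  (kLabHist_box_cons (ABC.a, false) k []).symm

theorem kHist_spine (k j : ℕ) :
    kHist .a k ((.a, false) :: bcSteps j) =
      replicate (k - 2 * j) (.a, false) ++ lastN k (bcSteps j) := by
  show kLabHist (ABC.a, false) k _ = _
  rw [kLabHist_box_cons, kLabHist_eq, length_bcSteps]

theorem count_kHist_spine (k j : ℕ) :
    (kHist .a k ((.a, false) :: bcSteps j)).count (.a, false) = k - 2 * j := by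
  have hnot : (ABC.a, false) ∉ lastN k (bcSteps j) := fun hmem => by
    simpa [bcSteps] using (drop_sublist _ _).subset hmem
  rw [kHist_spine, count_append, count_replicate_self, count_eq_zero.2 hnot, add_zero]

theorem kHist_spine_succ {k j : ℕ} (hj : k ≤ 2 * j) :
    kHist .a k ((.a, false) :: bcSteps (j + 1)) = kHist .a k ((.a, false) :: bcSteps j) := by
  rw [kHist_spine, kHist_spine, bcSteps_succ, lastN_append, length_bcSteps,
    Nat.sub_eq_zero_of_le hj, Nat.sub_eq_zero_of_le (by omega)]
  simp [lastN]

theorem kHist_spine_eq_iff (k i j : ℕ) :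
    kHist .a k ((.a, false) :: bcSteps i) = kHist .a k ((.a, false) :: bcSteps j) ↔
      min i ((k + 1) / 2) = min j ((k + 1) / 2) := by
  constructor
  · intro h
    have := congrArg (count (ABC.a, false)) h
    rw [count_kHist_spine, count_kHist_spine] at this
    omega
  · intro h
    have stable : ∀ l, (k + 1) / 2 ≤ l →
        kHist .a k ((.a, false) :: bcSteps l) = kHist .a k ((.a, false) :: bcSteps ((k + 1) / 2)) :=
      fun l hl => Nat.le_induction rfl (fun l _ ih => (kHist_spine_succ (by omega)).trans ih) l hl
    by_cases hi : (k + 1) / 2 ≤ i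
    · rw [stable i hi, stable j (by omega)]
    · rw [show i = j by omega]

/-- The histories ending like those of the spine `b, …, b, □` of `fcns (tBC n)`: first child
of the root or next sibling of a `c`. -/
def onSpine (z : List (ABC × Bool)) : Bool :=
  decide (z.getLast? = some (.a, false) ∨ z.getLast? = some (.c, true))

def spineNodes (n : ℕ) : List (List (ABC × Bool) × ABC × ℕ) :=
  ([], .a, 2) :: ((range n).map (fun j => ((.a, false) :: bcSteps j, .b, 2)) ++
    [((.a, false) :: bcSteps n, .a, 0)])

theorem filter_onSpine_ldata {k : ℕ} (hk : k ≠ 0) (n : ℕ) :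
    (ldata [] (fcnsT .a (tBC n))).filter (onSpine ∘ fun e => kHist .a k e.1) = spineNodes n := by
  simp [ldata_fcnsT_tBC, filter_flatMap, ← map_eq_flatMap, bcBlock, spineNodes, onSpine,
    getLast?_kHist hk, getLast?_cons, getLast?_append, getLast?_bcSteps,
    apply_ite (Option.getD · (ABC.a, false))]

theorem filter_not_onSpine_ldata {k : ℕ} (hk : k ≠ 0) (n : ℕ) :
    (ldata [] (fcnsT .a (tBC n))).filter (fun e => !onSpine (kHist .a k e.1)) =
      (range n).flatMap (fun j => (bcBlock ((.a, false) :: bcSteps j)).tail) ++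
        [([(.a, true)], .a, 0)] := by
  simp [ldata_fcnsT_tBC, filter_flatMap, bcBlock, onSpine, getLast?_kHist hk, getLast?_cons,
    getLast?_append, getLast?_bcSteps, apply_ite (Option.getD · (ABC.a, false))]

/-- Off the spine every `k`-history determines its node's label and degree through its last
entry, the position relative to the parent. -/
theorem entropySum_filter_not_onSpine {k : ℕ} (hk : k ≠ 0) (n : ℕ) :
    entropySum ((ldata [] (fcnsT .a (tBC n))).filter fun e => !onSpine (kHist .a k e.1))
      (fun e => kHist .a k e.1) (·.2) = 0 := by
  have key : ∀ x ∈ (range n).flatMap (fun j => (bcBlock ((.a, false) :: bcSteps j)).tail) ++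
      [([(.a, true)], .a, 0)],
      x.2 = if (kHist .a k x.1).getLast? = some (.b, true) then (.c, 2) else (.a, 0) := by
    simp only [mem_append, mem_flatMap, bcBlock, tail_cons, mem_cons, not_mem_nil, or_false]
    rintro _ (⟨j, -, rfl | rfl | rfl⟩ | rfl) <;>
      simp [getLast?_kHist hk, getLast?_cons, getLast?_append]
  rw [filter_not_onSpine_ldata hk]
  exact entropySum_eq_zero fun x hx y hy hxy => by rw [key x hx, key y hy, hxy]

theorem entropySum_spineNodes {k n : ℕ} (hk : k ≠ 0) (hn : n ≠ 0) :
    entropySum (spineNodes n) (fun e => kHist .a k e.1) (·.2) =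
      2 + ((n - (k + 1) / 2 : ℕ) : ℝ) *
          Real.logb 2 (((n - (k + 1) / 2 : ℕ) + 1 : ℝ) / (n - (k + 1) / 2 : ℕ)) +
        Real.logb 2 ((n - (k + 1) / 2 : ℕ) + 1) := by
  obtain ⟨m, rfl⟩ := Nat.exists_eq_add_one_of_ne_zero hn
  have hsplit : spineNodes (m + 1) =
      [([], .a, 2), ((.a, false) :: bcSteps 0, .b, 2)] ++
        ((range m).map (fun j => ((.a, false) :: bcSteps (j + 1), .b, 2)) ++
          [((.a, false) :: bcSteps (m + 1), .a, 0)]) := by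
    simp [spineNodes, range_succ_eq_map]
  have hcount : ((range m).map (fun j => ((ABC.a, false) :: bcSteps (j + 1), ABC.b, 2))).countP
      (fun s => kHist .a k s.1 = kHist .a k ((.a, false) :: bcSteps (m + 1))) =
        m + 1 - (k + 1) / 2 := by
    rw [countP_map, show m + 1 - (k + 1) / 2 = m - ((k + 1) / 2 - 1) by omega,
      ← countP_range_le]
    refine countP_congr fun j hj => ?_
    simp only [Function.comp_apply, decide_eq_true_eq, kHist_spine_eq_iff]
    have := mem_range.1 hj
    omega
  have hsep : ∀ x ∈ [(([] : List (ABC × Bool)), ABC.a, 2), ((.a, false) :: bcSteps 0, .b, 2)],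
      ∀ y ∈ (range m).map (fun j => ((ABC.a, false) :: bcSteps (j + 1), ABC.b, 2)) ++
        [((.a, false) :: bcSteps (m + 1), .a, 0)], kHist .a k x.1 ≠ kHist .a k y.1 := by
    simp only [mem_cons, mem_append, mem_map, mem_range, not_mem_nil, or_false]
    rintro x (rfl | rfl) y (⟨j, -, rfl⟩ | rfl) <;>
      simp only [ne_eq, kHist_nil, kHist_spine_eq_iff] <;> omega
  have hpair : entropySum [(([] : List (ABC × Bool)), ABC.a, 2), ((.a, false) :: bcSteps 0, .b, 2)]
      (fun e => kHist .a k e.1) (·.2) = 2 :=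
    entropySum_pair (kHist_nil k) (by decide)
  rw [hsplit, entropySum_append _ hsep, hpair,
    entropySum_append_singleton (v := (.b, 2)) (by simp) (by simp), hcount]
  ring

theorem Hls_fcnsT_tBC {k n : ℕ} (hk : k ≠ 0) (hn : n ≠ 0) :
    Hls ABC.a k (fcnsT .a (tBC n)) =
      2 + ((n - (k + 1) / 2 : ℕ) : ℝ) *
          Real.logb 2 (((n - (k + 1) / 2 : ℕ) + 1 : ℝ) / (n - (k + 1) / 2 : ℕ)) +
        Real.logb 2 ((n - (k + 1) / 2 : ℕ) + 1) := by
  rw [Hls, entropySum_eq_filter_add_filter _ _ _ onSpine, filter_onSpine_ldata hk,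
    entropySum_filter_not_onSpine hk, add_zero, entropySum_spineNodes hk hn]

/-- For `t_n = a((bc)^n)` and any `k ≥ 1` (with padding symbol `a`):
(i) `|t_n| = 2n + 1`; (ii) `H^{deg,ℓ}_k(t_n) = 2n`; (iii) `H^ℓ_k(t_n) ≥ 2n`;
(iv) `H_k(t_n) ≤ log2 e + log2 (n - ⌊(k-1)/2⌋) + 2`. -/
theorem tBC_entropies (n k : ℕ) (hn : 1 ≤ n) (hk : 1 ≤ k) :
    sizeU (tBC n) = 2 * n + 1 ∧
    HdlU ABC.a k (tBC n) = 2 * n ∧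
    (2 * n : ℝ) ≤ HlU ABC.a k (tBC n) ∧
    Hls ABC.a k (fcnsT ABC.a (tBC n)) ≤
      Real.logb 2 (Real.exp 1) + Real.logb 2 ((n : ℝ) - ((k - 1) / 2 : ℕ)) + 2 := by
  refine ⟨sizeU_tBC n, HdlU_tBC n k hn, HlU_tBC n k hn, ?_⟩
  rw [Hls_fcnsT_tBC (by omega) (by omega)]
  have hspine := mul_logb_add_one_div_le one_lt_two (n - (k + 1) / 2)
  have hfinal := logb_natSub_succ_add_one_le one_lt_two n ((k - 1) / 2)
  rw [show (k - 1) / 2 + 1 = (k + 1) / 2 by omega] at hfinal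
  linarith
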